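/- arXiv:0906.0389 — 2 statements merged into one kernel-verified Lean document; each statement's English description precedes it below -/
import Mathlib

section
/- With n = 1 and k, m ≥ 2, the number of unknowns C(m-1+(k-1), m-1)·m² is greater than or equal to the number of equations C(m-1+k, m-1)·m + C(m-1+(k-1), m-1), with equality exactly when k = m = 2. -/
/-- For `k, m ≥ 2` the number of unknowns is at least the number of equations,
with equality exactly when `k = m = 2`. -/
theorem system_underdetermined (k m : ℕ) (hk : 2 ≤ k) (hm : 2 ≤ m) :
    (m + k - 1).choose (m - 1) * m + (m + k - 2).choose (m - 1)
        ≤ (m + k - 2).choose (m - 1) * m ^ 2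
      ∧ ((m + k - 2).choose (m - 1) * m ^ 2
            = (m + k - 1).choose (m - 1) * m + (m + k - 2).choose (m - 1)
          ↔ k = 2 ∧ m = 2) := by
  have hCpos : 0 < (m + k - 2).choose (m - 1) := Nat.choose_pos (by omega)
  have key : (m + k - 2).choose (m - 1) * (m + k - 1)
      = (m + k - 1).choose (m - 1) * k := by
    have h := Nat.choose_mul_succ_eq (m + k - 2) (m - 1)
    have e1 : m + k - 2 + 1 = m + k - 1 := by omega
    have e2 : m + k - 1 - (m - 1) = k := by omega
    rw [e1, e2] at h
    exact h
  set C := (m + k - 2).choose (m - 1) with hCdef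
  set D := (m + k - 1).choose (m - 1) with hDdef
  have hkpos : 0 < k := by omega
  have hscale : k * (D * m + C) = C * ((m + k - 1) * m + k) := by
    have h1 : k * (D * m + C) = D * k * m + C * k := by ring
    rw [h1, ← key]; ring
  have ineq : (m + k - 1) * m + k ≤ m ^ 2 * k := by
    obtain ⟨a, rfl⟩ : ∃ a, k = a + 2 := ⟨k - 2, by omega⟩
    obtain ⟨b, rfl⟩ : ∃ b, m = b + 2 := ⟨m - 2, by omega⟩
    have e : b + 2 + (a + 2) - 1 = a + b + 3 := by omega
    rw [e]
    nlinarith [Nat.zero_le (a * b ^ 2)]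
  have hle : D * m + C ≤ C * m ^ 2 := by
    have h2 : k * (D * m + C) ≤ k * (C * m ^ 2) := by
      rw [hscale]
      calc C * ((m + k - 1) * m + k) ≤ C * (m ^ 2 * k) :=
            Nat.mul_le_mul_left C ineq
        _ = k * (C * m ^ 2) := by ring
    exact Nat.le_of_mul_le_mul_left h2 hkpos
  refine ⟨hle, ?_, ?_⟩
  · intro h
    have h2 : C * ((m + k - 1) * m + k) = C * (m ^ 2 * k) := by
      rw [← hscale, ← h]; ring
    have h3 : (m + k - 1) * m + k = m ^ 2 * k :=
      Nat.eq_of_mul_eq_mul_left hCpos h2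
    obtain ⟨a, rfl⟩ : ∃ a, k = a + 2 := ⟨k - 2, by omega⟩
    obtain ⟨b, rfl⟩ : ∃ b, m = b + 2 := ⟨m - 2, by omega⟩
    have e : b + 2 + (a + 2) - 1 = a + b + 3 := by omega
    rw [e] at h3
    have hz : ((a : ℤ) + b + 3) * ((b : ℤ) + 2) + ((a : ℤ) + 2)
        = ((b : ℤ) + 2) ^ 2 * ((a : ℤ) + 2) := by exact_mod_cast h3
    have h4 : (a : ℤ) * (b : ℤ) ^ 2 + 3 * ((a : ℤ) * (b : ℤ)) + (a : ℤ)
        + (b : ℤ) ^ 2 + 3 * (b : ℤ) = 0 := by linear_combination -hz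
    have t1 : (0 : ℤ) ≤ (a : ℤ) * (b : ℤ) ^ 2 := by positivity
    have t2 : (0 : ℤ) ≤ 3 * ((a : ℤ) * (b : ℤ)) := by positivity
    have t3 : (0 : ℤ) ≤ (a : ℤ) := by positivity
    have t4 : (0 : ℤ) ≤ (b : ℤ) ^ 2 := by positivity
    have t5 : (0 : ℤ) ≤ (b : ℤ) := by positivity
    have ha : (a : ℤ) = 0 := by linarith
    have hb : (b : ℤ) = 0 := by linarith
    have ha' : a = 0 := by exact_mod_cast ha
    have hb' : b = 0 := by exact_mod_cast hb
    exact ⟨by omega, by omega⟩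
  · rintro ⟨rfl, rfl⟩
    simp [hCdef, hDdef]
end

section
/- Suppose k ≥ 2 and m ≥ 2. The system of linear equations in the unknowns B^{J,j}_i (J a multi-index of length k-1, 1 ≤ i,j ≤ m) given by: (a) for each J with |J| = k-1, ∑_{j=1}^m B^{J,j}_j = c_J; and (b) for each K with |K| = k and each j, ∑_{(I,i): I+1_i=K} B^{I,i}_j = d_{K,j}; has a solution for every choice of right-hand sides c_J, d_{K,j} ∈ ℝ (i.e., the coefficient matrix has maximal rank, equal to the number of equations). -/
open Finset

/-- The length `|I|` of a multi-index `I ∈ ℕ^m`. -/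
def mdeg {m : ℕ} (I : Fin m →₀ ℕ) : ℕ := I.sum fun _ n => n

/-- The finset of multi-indexes `I ∈ ℕ^m` with `|I| = l`. -/
def Lam (m l : ℕ) : Finset (Fin m →₀ ℕ) := Finset.finsuppAntidiag Finset.univ l

/-- The finset of pairs `(I, i)` with `I + 1_i = J`. -/
noncomputable def pairsTo {m : ℕ} (J : Fin m →₀ ℕ) : Finset ((Fin m →₀ ℕ) × Fin m) :=
  ((Lam m (mdeg J - 1)) ×ˢ Finset.univ).filter fun p => p.1 + Finsupp.single p.2 1 = J

section Aux

variable {m : ℕ}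

lemma mdeg_eq_sum (I : Fin m →₀ ℕ) : mdeg I = ∑ i, I i := by
  rw [mdeg, Finsupp.sum_fintype]
  intro _; rfl

lemma mem_Lam {l : ℕ} {J : Fin m →₀ ℕ} : J ∈ Lam m l ↔ mdeg J = l := by
  rw [Lam, Finset.mem_finsuppAntidiag]
  constructor
  · rintro ⟨h, -⟩; rw [mdeg_eq_sum]; exact h
  · intro h; exact ⟨by rw [← mdeg_eq_sum]; exact h, Finset.subset_univ _⟩

lemma mdeg_add (a b : Fin m →₀ ℕ) : mdeg (a + b) = mdeg a + mdeg b := by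
  simp [mdeg_eq_sum, Finset.sum_add_distrib]

lemma mdeg_single (i : Fin m) (n : ℕ) : mdeg (Finsupp.single i n) = n := by
  rw [mdeg]; exact Finsupp.sum_single_index rfl

lemma mem_pairsTo {K : Fin m →₀ ℕ} {p : (Fin m →₀ ℕ) × Fin m} :
    p ∈ pairsTo K ↔ p.1 + Finsupp.single p.2 1 = K := by
  rw [pairsTo, Finset.mem_filter, Finset.mem_product]
  constructor
  · exact fun h => h.2
  · intro h
    refine ⟨⟨mem_Lam.2 ?_, Finset.mem_univ _⟩, h⟩
    have : mdeg K = mdeg p.1 + 1 := by rw [← h, mdeg_add, mdeg_single]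
    omega

variable [NeZero m]

/-- A designated index in the support of a nonzero multi-index. -/
noncomputable def i0 (J : Fin m →₀ ℕ) : Fin m :=
  if h : J.support.Nonempty then J.support.min' h else 0

/-- An index different from `i0 J` (for `m ≥ 2`). -/
noncomputable def j0 (J : Fin m →₀ ℕ) : Fin m := if i0 J = 0 then 1 else 0

/-- The multi-index `J - 1_{i0 J} + 1_{j0 J}`. -/
noncomputable def shiftJ (J : Fin m →₀ ℕ) : Fin m →₀ ℕ :=
  J - Finsupp.single (i0 J) 1 + Finsupp.single (j0 J) 1

/-- Elementary correction pattern attached to a multi-index `J`. -/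
noncomputable def ecorr (J I : Fin m →₀ ℕ) (a b : Fin m) : ℝ :=
  if b = j0 J then
    (if (I, a) = (J, j0 J) then 1 else 0) - (if (I, a) = (shiftJ J, i0 J) then 1 else 0)
  else 0

/-- The main part of the solution, taking care of equations (b). -/
noncomputable def Bdef (d : (Fin m →₀ ℕ) → Fin m → ℝ) (I : Fin m →₀ ℕ) (a b : Fin m) : ℝ :=
  if a = i0 (I + Finsupp.single a 1) then d (I + Finsupp.single a 1) b else 0

lemma i0_mem {J : Fin m →₀ ℕ} (hJ : J ≠ 0) : i0 J ∈ J.support := by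
  rw [i0, dif_pos (Finsupp.support_nonempty_iff.2 hJ)]
  exact Finset.min'_mem _ _

lemma single_i0_le {J : Fin m →₀ ℕ} (hJ : J ≠ 0) : Finsupp.single (i0 J) 1 ≤ J := by
  rw [Finsupp.single_le_iff]
  have := i0_mem hJ
  rw [Finsupp.mem_support_iff] at this
  omega

lemma sub_add_i0 {J : Fin m →₀ ℕ} (hJ : J ≠ 0) :
    J - Finsupp.single (i0 J) 1 + Finsupp.single (i0 J) 1 = J :=
  tsub_add_cancel_of_le (single_i0_le hJ)

lemma j0_ne_i0 (hm : 2 ≤ m) (J : Fin m →₀ ℕ) : j0 J ≠ i0 J := by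
  have h10 : (1 : Fin m) ≠ 0 := by
    rw [Fin.ne_iff_vne, Fin.val_one', Fin.val_zero, Nat.mod_eq_of_lt (by omega : 1 < m)]
    omega
  rw [j0]
  split
  · next h => rw [h]; exact h10
  · next h => exact fun e => h e.symm

lemma shift_add {J : Fin m →₀ ℕ} (hJ : J ≠ 0) :
    shiftJ J + Finsupp.single (i0 J) 1 = J + Finsupp.single (j0 J) 1 := by
  rw [shiftJ, add_right_comm, sub_add_i0 hJ]

lemma Bdef_sum (d : (Fin m →₀ ℕ) → Fin m → ℝ) {K : Fin m →₀ ℕ} (hK : K ≠ 0) (j : Fin m) :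
    ∑ p ∈ pairsTo K, Bdef d p.1 p.2 j = d K j := by
  classical
  have hps : ((K - Finsupp.single (i0 K) 1, i0 K) : (Fin m →₀ ℕ) × Fin m) ∈ pairsTo K :=
    mem_pairsTo.2 (sub_add_i0 hK)
  rw [Finset.sum_eq_single_of_mem _ hps]
  · show (if i0 K = i0 (K - Finsupp.single (i0 K) 1 + Finsupp.single (i0 K) 1)
        then d (K - Finsupp.single (i0 K) 1 + Finsupp.single (i0 K) 1) j else 0) = d K j
    rw [sub_add_i0 hK, if_pos rfl]
  · intro p hp hne
    have hpe := mem_pairsTo.1 hp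
    show (if p.2 = i0 (p.1 + Finsupp.single p.2 1) then d (p.1 + Finsupp.single p.2 1) j else 0) = 0
    have hcond : ¬ (p.2 = i0 (p.1 + Finsupp.single p.2 1)) := by
      rw [hpe]
      intro h2
      apply hne
      have h1 : p.1 + Finsupp.single (i0 K) 1
          = (K - Finsupp.single (i0 K) 1) + Finsupp.single (i0 K) 1 := by
        rw [sub_add_i0 hK, ← h2]
        exact hpe
      exact Prod.ext (add_right_cancel h1) h2
    rw [if_neg hcond]

lemma ecorr_diag_sum (hm : 2 ≤ m) (J' J : Fin m →₀ ℕ) :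
    ∑ j, ecorr J' J j j = if J = J' then 1 else 0 := by
  classical
  unfold ecorr
  rw [Finset.sum_ite_eq' Finset.univ (j0 J')]
  rw [if_pos (Finset.mem_univ _)]
  rw [if_neg (by simp [(j0_ne_i0 hm J')] : ¬ ((J, j0 J') = (shiftJ J', i0 J'))), sub_zero]
  simp [Prod.ext_iff]

lemma ecorr_pairs_sum (hm : 2 ≤ m) {J' : Fin m →₀ ℕ} (hJ' : J' ≠ 0) (K : Fin m →₀ ℕ)
    (j : Fin m) : ∑ p ∈ pairsTo K, ecorr J' p.1 p.2 j = 0 := by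
  classical
  unfold ecorr
  by_cases h : j = j0 J'
  · simp only [if_pos h]
    rw [Finset.sum_sub_distrib]
    have e1 : ∑ p ∈ pairsTo K, (if (p.1, p.2) = (J', j0 J') then (1 : ℝ) else 0)
        = if (J', j0 J') ∈ pairsTo K then 1 else 0 := by
      simp only [Prod.mk.eta]
      exact Finset.sum_ite_eq' _ _ _
    have e2 : ∑ p ∈ pairsTo K, (if (p.1, p.2) = (shiftJ J', i0 J') then (1 : ℝ) else 0)
        = if (shiftJ J', i0 J') ∈ pairsTo K then 1 else 0 := by
      simp only [Prod.mk.eta]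
      exact Finset.sum_ite_eq' _ _ _
    rw [e1, e2]
    have : ((J', j0 J') ∈ pairsTo K) ↔ ((shiftJ J', i0 J') ∈ pairsTo K) := by
      rw [mem_pairsTo, mem_pairsTo]
      simp only
      rw [shift_add hJ']
    by_cases hmem : (J', j0 J') ∈ pairsTo K
    · rw [if_pos hmem, if_pos (this.1 hmem), sub_self]
    · rw [if_neg hmem, if_neg (fun hh => hmem (this.2 hh)), sub_self]
  · simp [h]

end Aux

/-- Proposition 3.1 (maximal rank): for `k, m ≥ 2`, the linear system on the
unknowns `B^{J,j}_i` given by the trace equations (a) and the raising equations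
(b) has a solution for every choice of right-hand sides. -/
theorem maximal_rank (k m : ℕ) (hk : 2 ≤ k) (hm : 2 ≤ m)
    (c : (Fin m →₀ ℕ) → ℝ) (d : (Fin m →₀ ℕ) → Fin m → ℝ) :
    ∃ B : (Fin m →₀ ℕ) → Fin m → Fin m → ℝ,
      (∀ J ∈ Lam m (k - 1), ∑ j : Fin m, B J j j = c J) ∧
      (∀ K ∈ Lam m k, ∀ j : Fin m, ∑ p ∈ pairsTo K, B p.1 p.2 j = d K j) := by
  haveI : NeZero m := ⟨by omega⟩
  classical
  refine ⟨fun I a b => Bdef d I a b + ∑ J ∈ Lam m (k - 1),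
      (c J - ∑ j', Bdef d J j' j') * ecorr J I a b, ?_, ?_⟩
  · intro J hJ
    rw [Finset.sum_add_distrib, Finset.sum_comm]
    have hcong : ∀ J' ∈ Lam m (k - 1),
        ∑ j, (c J' - ∑ j', Bdef d J' j' j') * ecorr J' J j j
          = if J = J' then (c J' - ∑ j', Bdef d J' j' j') else 0 := by
      intro J' _
      rw [← Finset.mul_sum, ecorr_diag_sum hm]
      by_cases h : J = J' <;> simp [h]
    rw [Finset.sum_congr rfl hcong, Finset.sum_ite_eq, if_pos hJ]
    ring
  · intro K hK j
    have hKdeg := mem_Lam.1 hK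
    have hK0 : K ≠ 0 := by
      intro h
      rw [h] at hKdeg
      simp [mdeg] at hKdeg
      omega
    rw [Finset.sum_add_distrib, Bdef_sum d hK0 j]
    have : ∑ p ∈ pairsTo K, ∑ J' ∈ Lam m (k - 1),
        (c J' - ∑ j', Bdef d J' j' j') * ecorr J' p.1 p.2 j = 0 := by
      rw [Finset.sum_comm]
      apply Finset.sum_eq_zero
      intro J' hJ'
      have hJ'deg := mem_Lam.1 hJ'
      have hJ'0 : J' ≠ 0 := by
        intro h
        rw [h] at hJ'deg
        simp [mdeg] at hJ'deg
        omega
      rw [← Finset.mul_sum, ecorr_pairs_sum hm hJ'0 K j, mul_zero]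
    rw [this, add_zero]
end
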